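/- Fix ρ ∈ (0,1], P_e ∈ (0,1), a finite index set I, nonnegative weights w_i for i ∈ I, and positive quanta φ_i > 0 for i ∈ I. For each integer M ≥ 2 let S(M) = −ln P_e + ρ·ln M, let ψ̄(M) = Σ_{i∈I} w_i·φ_i·(ln M)/⌈S(M)⌉_{φ_i} (the inner-bound nat-rate threshold) and Ψ̄(M) = Σ_{i∈I} w_i·φ_i·(ln M)/S(M) (the outer-bound nat-rate threshold). Then ψ̄(M) ≤ Ψ̄(M) for every M ≥ 2, and both ψ̄(M) and Ψ̄(M) converge to (1/ρ)·Σ_{i∈I} w_i·φ_i as M → ∞; in particular Ψ̄(M) − ψ̄(M) → 0. -/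
import Mathlib


/-- `qceil x q` is the smallest positive integer multiple of `q` that is at least `x`,
i.e. `min {n*q : n ∈ ℤ, n ≥ 1, x ≤ n*q}`. -/
noncomputable def qceil (x q : ℝ) : ℝ := q * ((max 1 ⌈x / q⌉ : ℤ) : ℝ)

lemma qceil_ge {x q : ℝ} (hq : 0 < q) : x ≤ qceil x q := by
  unfold qceil
  have h1 : x / q ≤ ((max 1 ⌈x / q⌉ : ℤ) : ℝ) := by
    refine le_trans (Int.le_ceil _) ?_
    exact_mod_cast le_max_right 1 ⌈x / q⌉
  calc x = q * (x / q) := by field_simp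
    _ ≤ q * ((max 1 ⌈x / q⌉ : ℤ) : ℝ) := by
        exact mul_le_mul_of_nonneg_left h1 hq.le

lemma qceil_pos {x q : ℝ} (hq : 0 < q) : 0 < qceil x q := by
  unfold qceil
  have h1 : (1 : ℝ) ≤ ((max 1 ⌈x / q⌉ : ℤ) : ℝ) := by
    exact_mod_cast le_max_left 1 ⌈x / q⌉
  nlinarith

lemma qceil_le {x q : ℝ} (hx : 0 ≤ x) (hq : 0 < q) : qceil x q ≤ x + q := by
  unfold qceil
  rcases le_total (⌈x / q⌉) 1 with h | h
  · rw [max_eq_left h]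
    simp only [Int.cast_one, mul_one]
    linarith
  · rw [max_eq_right h]
    have h2 : ((⌈x / q⌉ : ℤ) : ℝ) < x / q + 1 := Int.ceil_lt_add_one _
    have h3 : q * (x / q) = x := by field_simp
    nlinarith

lemma auxT (c ρ : ℝ) (hρ : 0 < ρ) :
    Filter.Tendsto (fun M : ℕ => Real.log M / (c + ρ * Real.log M))
      Filter.atTop (nhds (1 / ρ)) := by
  have hlog : Filter.Tendsto (fun M : ℕ => Real.log M) Filter.atTop Filter.atTop :=
    Real.tendsto_log_atTop.comp tendsto_natCast_atTop_atTop
  have h1 : Filter.Tendsto (fun t : ℝ => t / (c + ρ * t)) Filter.atTop (nhds (1 / ρ)) := by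
    have h0 : Filter.Tendsto (fun t : ℝ => c / t + ρ) Filter.atTop (nhds (0 + ρ)) := by
      exact (Filter.Tendsto.div_atTop tendsto_const_nhds Filter.tendsto_id).add
        tendsto_const_nhds
    rw [zero_add] at h0
    have h2 := h0.inv₀ hρ.ne'
    rw [← one_div] at h2
    refine Filter.Tendsto.congr' ?_ h2
    filter_upwards [Filter.eventually_gt_atTop (max 0 (-(c/ρ)))] with t ht
    have ht0 : 0 < t := lt_of_le_of_lt (le_max_left _ _) ht
    have htc : 0 < c + ρ * t := by
      have : -(c/ρ) < t := lt_of_le_of_lt (le_max_right _ _) ht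
      have := mul_lt_mul_of_pos_left this hρ
      rw [mul_neg, mul_div_cancel₀ _ hρ.ne'] at this
      linarith
    have heq : c / t + ρ = (c + ρ * t) / t := by field_simp
    rw [heq, inv_div]
  exact h1.comp hlog

/-- Analytic content of Corollary 6: the inner-bound threshold
`ψ̄(M) = Σ_i w_i·φ_i·(ln M)/⌈S(M)⌉_{φ_i}` never exceeds the outer-bound threshold
`Ψ̄(M) = Σ_i w_i·φ_i·(ln M)/S(M)` for `M ≥ 2`, both converge to
`(1/ρ)·Σ_i w_i·φ_i` as `M → ∞`, and in particular `Ψ̄(M) − ψ̄(M) → 0`. -/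
theorem stmt11 (ρ Pe : ℝ) (hρ : ρ ∈ Set.Ioc (0 : ℝ) 1) (hPe : Pe ∈ Set.Ioo (0 : ℝ) 1)
    (I : Type*) [Fintype I] (w φ : I → ℝ) (hw : ∀ i, 0 ≤ w i) (hφ : ∀ i, 0 < φ i) :
    let S : ℕ → ℝ := fun M => -Real.log Pe + ρ * Real.log M
    let ψ : ℕ → ℝ := fun M => ∑ i, w i * φ i * Real.log M / qceil (S M) (φ i)
    let Ψ : ℕ → ℝ := fun M => ∑ i, w i * φ i * Real.log M / S M
    (∀ M : ℕ, 2 ≤ M → ψ M ≤ Ψ M) ∧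
    Filter.Tendsto ψ Filter.atTop (nhds ((1 / ρ) * ∑ i, w i * φ i)) ∧
    Filter.Tendsto Ψ Filter.atTop (nhds ((1 / ρ) * ∑ i, w i * φ i)) ∧
    Filter.Tendsto (fun M => Ψ M - ψ M) Filter.atTop (nhds 0) := by
  intro S ψ Ψ
  obtain ⟨hρ0, hρ1⟩ := hρ
  obtain ⟨hPe0, hPe1⟩ := hPe
  have hc : 0 < -Real.log Pe := by
    have := Real.log_neg hPe0 hPe1
    linarith
  have hS : ∀ M : ℕ, 1 ≤ M → 0 < S M := by
    intro M hM
    have hlM : 0 ≤ Real.log M := Real.log_nonneg (by exact_mod_cast hM)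
    have : 0 ≤ ρ * Real.log M := by positivity
    simp only [S]; linarith
  -- Part 1
  have part1 : ∀ M : ℕ, 2 ≤ M → ψ M ≤ Ψ M := by
    intro M hM
    have hSM : 0 < S M := hS M (le_trans (by norm_num) hM)
    refine Finset.sum_le_sum fun i _ => ?_
    have hq := qceil_ge (x := S M) (hφ i)
    have hlM : 0 ≤ Real.log M := Real.log_nonneg (by exact_mod_cast le_trans (by norm_num) hM)
    have hnum : 0 ≤ w i * φ i * Real.log M := by
      have := (hφ i).le; have := hw i; positivity
    exact div_le_div_of_nonneg_left hnum hSM hq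
  -- per-term tendsto for Ψ
  have hΨterm : ∀ i : I, Filter.Tendsto (fun M : ℕ => w i * φ i * Real.log M / S M)
      Filter.atTop (nhds (w i * φ i * (1 / ρ))) := by
    intro i
    have h := (auxT (-Real.log Pe) ρ hρ0).const_mul (w i * φ i)
    refine h.congr fun M => ?_
    simp only [S]
    rw [mul_div_assoc]
  -- per-term tendsto for ψ via squeeze
  have hψterm : ∀ i : I, Filter.Tendsto (fun M : ℕ => w i * φ i * Real.log M / qceil (S M) (φ i))
      Filter.atTop (nhds (w i * φ i * (1 / ρ))) := by
    intro i
    have hlo : Filter.Tendsto (fun M : ℕ => Real.log M / ((-Real.log Pe + φ i) + ρ * Real.log M))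
        Filter.atTop (nhds (1 / ρ)) := auxT _ ρ hρ0
    have hhi : Filter.Tendsto (fun M : ℕ => Real.log M / (-Real.log Pe + ρ * Real.log M))
        Filter.atTop (nhds (1 / ρ)) := auxT _ ρ hρ0
    have hmid : Filter.Tendsto (fun M : ℕ => Real.log M / qceil (S M) (φ i))
        Filter.atTop (nhds (1 / ρ)) := by
      refine tendsto_of_tendsto_of_tendsto_of_le_of_le' hlo hhi ?_ ?_
      · filter_upwards [Filter.eventually_ge_atTop 1] with M hM
        have hSM := hS M hM
        have hlM : 0 ≤ Real.log M := Real.log_nonneg (by exact_mod_cast hM)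
        have hqle : qceil (S M) (φ i) ≤ S M + φ i := qceil_le hSM.le (hφ i)
        have hqpos : 0 < qceil (S M) (φ i) := qceil_pos (hφ i)
        have : qceil (S M) (φ i) ≤ (-Real.log Pe + φ i) + ρ * Real.log M := by
          simp only [S] at hqle ⊢; linarith
        exact div_le_div_of_nonneg_left hlM hqpos this
      · filter_upwards [Filter.eventually_ge_atTop 1] with M hM
        have hSM := hS M hM
        have hlM : 0 ≤ Real.log M := Real.log_nonneg (by exact_mod_cast hM)
        have hqge : S M ≤ qceil (S M) (φ i) := qceil_ge (hφ i)
        exact div_le_div_of_nonneg_left hlM hSM hqge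
    have h := hmid.const_mul (w i * φ i)
    refine h.congr fun M => ?_
    rw [mul_div_assoc]
  -- assemble sums
  have sumeq : (1 / ρ) * ∑ i, w i * φ i = ∑ i : I, w i * φ i * (1 / ρ) := by
    rw [Finset.mul_sum]
    exact Finset.sum_congr rfl fun i _ => by ring
  have hΨ : Filter.Tendsto Ψ Filter.atTop (nhds ((1 / ρ) * ∑ i, w i * φ i)) := by
    rw [sumeq]
    exact tendsto_finset_sum _ fun i _ => hΨterm i
  have hψ : Filter.Tendsto ψ Filter.atTop (nhds ((1 / ρ) * ∑ i, w i * φ i)) := by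
    rw [sumeq]
    exact tendsto_finset_sum _ fun i _ => hψterm i
  refine ⟨part1, hψ, hΨ, ?_⟩
  simpa using hΨ.sub hψ
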